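/- Let k, n be integers with 3 ≤ k ≤ n and let S ⊆ [n]^{(k)} be nonempty. Then |δ_{k−2}^-(S)| / C(n, 2) ≥ (|S| / C(n, k))^{2/k}. -/

import Mathlib

/-- The set of all `r`-subsets of `Fin n` contained in some member of `S`
(for `S ⊆ [n]^{(k)}` and `r = k − ℓ`, this is the `ℓ`-th lower shadow `δ_ℓ^-(S)`). -/
def lowerShadow (n r : ℕ) (S : Finset (Finset (Fin n))) : Finset (Finset (Fin n)) :=
  Finset.univ.filter fun t => t.card = r ∧ ∃ A ∈ S, t ⊆ A

/-!
By Kruskal–Katona we may replace `S` by the initial segment `initSeg s` of colex of the same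
size. Let `a` be the largest element of `s` and `W` the set of `u ≠ a` such that `{u, a}` lies in a
member of the segment, `v = #W`. Members avoiding `a` are `k`-subsets of `[0, a)`, members
containing `a` are `a` together with a `(k - 1)`-subset of `W`; hence `|S| ≤ C(a, k) + C(v, k - 1)`.
The `2`-shadow contains every pair in `[0, a)` and every `{u, a}` with `u ∈ W`, so it has at least
`C(a, 2) + v` elements.

Take the real `x ∈ (a, a + 1]` with `C(x, 2) = C(a, 2) + v`. A Lovász-type inequality, proved by
induction on `k` in steps of two, gives `C(a, k) + C(v, k - 1) ≤ C(x, k)`. Finally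
`C(x, k) / C(n, k)` is the product of the ratios `rᵢ = (x - i) / (n - i)`, `i < k`, which decrease
in `i`; hence it is at most `r₀ r₁ ^ (k - 1) ≤ (r₀ r₁) ^ (k / 2) = (C(x, 2) / C(n, 2)) ^ (k / 2)`.
-/

open Finset
open scoped Nat

section DescPochhammer

variable {a v x : ℝ}

lemma descPochhammer_eval_add_two (k : ℕ) (y : ℝ) :
    (descPochhammer ℝ (k + 2)).eval y =
      (descPochhammer ℝ k).eval y * ((y - k) * (y - (k + 1))) := by
  rw [descPochhammer_succ_eval, descPochhammer_succ_eval]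
  push_cast
  ring

lemma add_one_mul_descPochhammer_eval (k : ℕ) (y : ℝ) :
    (y + 1) * (descPochhammer ℝ k).eval y = (descPochhammer ℝ (k + 1)).eval (y + 1) := by
  simp [descPochhammer_succ_left]

lemma descPochhammer_three_add_le (hv : 2 ≤ v) (hva : v + 1 ≤ a) (hax : a < x)
    (hxa : x ≤ a + 1) (hq : x * (x - 1) = a * (a - 1) + 2 * v) :
    (descPochhammer ℝ 3).eval a + 3 * (descPochhammer ℝ 2).eval v ≤
      (descPochhammer ℝ 3).eval x := by
  simp only [descPochhammer_eval_eq_prod_range, prod_range_succ, prod_range_zero]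
  push_cast
  have hav : v ≤ a * (x - a) := by nlinarith
  have hexpand : x * (x - 1) * (x - 2) =
      a * (a - 1) * (a - 2) + a * (a - 1) * (x - a) + 2 * v * (x - 2) := by
    linear_combination (x - 2) * hq
  nlinarith [mul_le_mul_of_nonneg_left hav (show 0 ≤ a - 1 by linarith)]

lemma descPochhammer_add_le_step (k : ℕ) (hkv : (k : ℝ) + 3 ≤ v) (hva : v + 1 ≤ a)
    (hax : a < x) (hxa : x ≤ a + 1) (hq : x * (x - 1) = a * (a - 1) + 2 * v)
    (ih : (descPochhammer ℝ (k + 2)).eval a + (k + 2) * (descPochhammer ℝ (k + 1)).eval v ≤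
      (descPochhammer ℝ (k + 2)).eval x) :
    (descPochhammer ℝ (k + 4)).eval a + (k + 4) * (descPochhammer ℝ (k + 3)).eval v ≤
      (descPochhammer ℝ (k + 4)).eval x := by
  set c : ℝ := k + 2
  set G := (descPochhammer ℝ (k + 2)).eval a
  set H := (descPochhammer ℝ (k + 1)).eval v
  set F := (descPochhammer ℝ (k + 2)).eval x
  have hH : 0 ≤ H := descPochhammer_nonneg (by push_cast; linarith)
  have hF : 0 ≤ F := descPochhammer_nonneg (by push_cast; linarith)
  have hGH : (v + 1) * H ≤ G := by
    rw [add_one_mul_descPochhammer_eval]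
    exact monotoneOn_descPochhammer_eval _ (Set.mem_Ici.2 (by push_cast; linarith))
      (Set.mem_Ici.2 (by push_cast; linarith)) hva
  -- Multiply `ih` by `(x - c) * (x - c - 1)`, which exceeds `(a - c) * (a - c - 1)` by at least
  -- `2 * (v - c)`.
  have hquad_x : (a - c) * (a - c - 1) + 2 * (v - c) ≤ (x - c) * (x - c - 1) := by nlinarith
  have hquad_v : (v - c + 1) * (v - c) ≤ (a - c) * (a - c - 1) :=
    mul_le_mul (by linarith) (by linarith) (by linarith) (by linarith)
  calc _ = G * ((a - c) * (a - c - 1)) + (c + 2) * (H * ((v - c + 1) * (v - c))) := by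
        rw [descPochhammer_eval_add_two (k + 2), descPochhammer_eval_add_two (k + 1)]
        push_cast
        ring
    _ ≤ (G + c * H) * ((a - c) * (a - c - 1) + 2 * (v - c)) := by
        nlinarith [mul_le_mul_of_nonneg_right hGH (show 0 ≤ 2 * (v - c) by linarith),
          mul_le_mul_of_nonneg_left hquad_v (show 0 ≤ c * H by positivity),
          mul_nonneg (mul_nonneg hH (show 0 ≤ v - c by linarith)) (show 0 ≤ c by positivity)]
    _ ≤ F * ((x - c) * (x - c - 1)) := mul_le_mul ih hquad_x (by nlinarith) hF
    _ = _ := by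
        rw [descPochhammer_eval_add_two (k + 2)]
        push_cast
        ring

-- Since `(descPochhammer ℝ j).eval y = j! * C(y, j)`, this reads
-- `C(a, k + 2) + C(v, k + 1) ≤ C(x, k + 2)` whenever `C(x, 2) = C(a, 2) + v`.
theorem descPochhammer_add_le (hva : v + 1 ≤ a) (hax : a < x) (hxa : x ≤ a + 1)
    (hq : x * (x - 1) = a * (a - 1) + 2 * v) (k : ℕ) (hkv : (k : ℝ) + 1 ≤ v) :
    (descPochhammer ℝ (k + 2)).eval a + (k + 2) * (descPochhammer ℝ (k + 1)).eval v ≤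
      (descPochhammer ℝ (k + 2)).eval x := by
  induction k using Nat.twoStepInduction with
  | zero =>
    simp only [descPochhammer_eval_eq_prod_range, prod_range_succ, prod_range_zero]
    push_cast
    linarith
  | one =>
    exact_mod_cast descPochhammer_three_add_le (by push_cast at hkv; linarith) hva hax hxa hq
  | more k ih _ =>
    push_cast at hkv ⊢
    rw [show (k : ℝ) + 2 + 2 = k + 4 by ring]
    exact descPochhammer_add_le_step k (by linarith) hva hax hxa hq (ih (by linarith))

end DescPochhammer

lemma exists_mul_sub_one_eq_add {a v : ℝ} (hv : 0 < v) (hva : v ≤ a) :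
    ∃ x ∈ Set.Ioc a (a + 1), x * (x - 1) = a * (a - 1) + 2 * v :=
  intermediate_value_Ioc (by linarith) (by fun_prop) ⟨by linarith, by linarith⟩

lemma sq_prod_range_le_mul_pow {r : ℕ → ℝ} {k : ℕ} (hr : AntitoneOn r (Set.Iic (k + 1)))
    (hr₀ : 0 ≤ r (k + 1)) :
    (∏ i ∈ range (k + 2), r i) ^ 2 ≤ (r 0 * r 1) ^ (k + 2) := by
  have hnonneg : ∀ i ≤ k + 1, 0 ≤ r i := fun i hi =>
    hr₀.trans (hr hi (Set.mem_Iic.2 le_rfl) hi)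
  have htail : ∏ i ∈ range k, r (i + 2) ≤ r 1 ^ k := by
    simpa using prod_le_prod (s := range k) (g := fun _ => r 1)
      (fun i hi => hnonneg (i + 2) (by simp at hi; omega))
      (fun i hi => hr (by simp) (by simp at hi ⊢; omega) (by omega))
  have hr₁ : r 1 ^ 2 ≤ r 0 * r 1 := by
    rw [sq]
    exact mul_le_mul_of_nonneg_right (hr (by simp) (by simp) zero_le_one) (hnonneg 1 (by omega))
  calc (∏ i ∈ range (k + 2), r i) ^ 2 = (∏ i ∈ range k, r (i + 2)) ^ 2 * (r 0 * r 1) ^ 2 := by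
        rw [prod_range_succ', prod_range_succ']; ring
    _ ≤ (r 1 ^ k) ^ 2 * (r 0 * r 1) ^ 2 := by
        gcongr
        exact prod_nonneg fun i hi => hnonneg (i + 2) (by simp at hi; omega)
    _ = (r 1 ^ 2) ^ k * (r 0 * r 1) ^ 2 := by ring
    _ ≤ (r 0 * r 1) ^ k * (r 0 * r 1) ^ 2 := by gcongr
    _ = (r 0 * r 1) ^ (k + 2) := by ring

lemma sq_descPochhammer_div_le_pow (k : ℕ) {x y : ℝ} (hx : (k : ℝ) + 1 ≤ x) (hxy : x ≤ y)
    (hy : (k : ℝ) + 1 < y) :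
    ((descPochhammer ℝ (k + 2)).eval x / (descPochhammer ℝ (k + 2)).eval y) ^ 2 ≤
      ((descPochhammer ℝ 2).eval x / (descPochhammer ℝ 2).eval y) ^ (k + 2) := by
  set r : ℕ → ℝ := fun i => (x - i) / (y - i)
  have hprod (m : ℕ) :
      (descPochhammer ℝ m).eval x / (descPochhammer ℝ m).eval y = ∏ i ∈ range m, r i := by
    simp only [descPochhammer_eval_eq_prod_range, prod_div_distrib, r]
  have hanti : AntitoneOn r (Set.Iic (k + 1)) := by
    intro i hi j hj hij
    have hj' : (j : ℝ) ≤ k + 1 := by exact_mod_cast hj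
    have hij' : (i : ℝ) ≤ j := by exact_mod_cast hij
    simp only [r]
    rw [div_le_div_iff₀ (by linarith) (by linarith)]
    nlinarith
  rw [hprod, hprod, show ∏ i ∈ range 2, r i = r 0 * r 1 by simp [prod_range_succ]]
  exact sq_prod_range_le_mul_pow hanti
    (div_nonneg (by push_cast; linarith) (by push_cast; linarith))

lemma rpow_div_le_of_pow_le_pow {u w : ℝ} {m k : ℕ} (hu : 0 ≤ u) (hw : 0 ≤ w) (hk : k ≠ 0)
    (h : u ^ m ≤ w ^ k) : u ^ ((m : ℝ) / k) ≤ w :=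
  calc u ^ ((m : ℝ) / k) = (u ^ m) ^ ((k : ℝ)⁻¹) := by
        rw [div_eq_mul_inv, Real.rpow_mul hu, Real.rpow_natCast]
    _ ≤ (w ^ k) ^ ((k : ℝ)⁻¹) := by gcongr
    _ = w := Real.pow_rpow_inv_natCast hw hk

lemma descPochhammer_eval_natCast_eq_factorial_mul_choose (k n : ℕ) :
    (descPochhammer ℝ k).eval (n : ℝ) = k ! * n.choose k := by
  rw [descPochhammer_eval_eq_descFactorial, Nat.descFactorial_eq_factorial_mul_choose]
  push_cast
  rfl

lemma descPochhammer_eval_div_eval_natCast (k n : ℕ) (x : ℝ) :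
    (descPochhammer ℝ k).eval x / (descPochhammer ℝ k).eval (n : ℝ) =
      (descPochhammer ℝ k).eval x / k ! / n.choose k := by
  rw [descPochhammer_eval_natCast_eq_factorial_mul_choose, div_div]

lemma exists_factorial_mul_choose_add_choose_le (k a v : ℕ) (hkv : k + 1 ≤ v) (hva : v ≤ a) :
    ∃ x : ℝ, a < x ∧ x ≤ a + 1 ∧ x * (x - 1) = a * (a - 1) + 2 * v ∧
      (k + 2)! * ((a.choose (k + 2) : ℝ) + v.choose (k + 1)) ≤
        (descPochhammer ℝ (k + 2)).eval x := by
  obtain ⟨x, ⟨hax, hxa⟩, hq⟩ := exists_mul_sub_one_eq_add (a := a) (v := v)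
    (by exact_mod_cast (show 0 < v by omega)) (by exact_mod_cast hva)
  refine ⟨x, hax, hxa, hq, ?_⟩
  calc (k + 2)! * ((a.choose (k + 2) : ℝ) + v.choose (k + 1))
      = (descPochhammer ℝ (k + 2)).eval (a : ℝ) +
          (k + 2) * (descPochhammer ℝ (k + 1)).eval (v : ℝ) := by
        simp only [descPochhammer_eval_natCast_eq_factorial_mul_choose,
          Nat.factorial_succ (k + 1)]
        push_cast
        ring
    _ ≤ (descPochhammer ℝ (k + 2)).eval x := by
        rcases hva.lt_or_eq with hva | rfl
        · exact descPochhammer_add_le (by exact_mod_cast hva) hax hxa hq k (by exact_mod_cast hkv)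
        -- for `v = a` the root is `x = a + 1` and the claim is Pascal's rule
        · have hx : x = v + 1 := by nlinarith
          rw [hx, ← add_one_mul_descPochhammer_eval, descPochhammer_succ_eval]
          push_cast
          exact le_of_eq (by ring)

theorem div_choose_rpow_le_div_choose_two {k n a v c m : ℕ} (hk : 2 ≤ k) (hkv : k - 1 ≤ v)
    (hva : v ≤ a) (han : a < n) (hc : c ≤ a.choose k + v.choose (k - 1))
    (hm : a.choose 2 + v ≤ m) :
    ((c : ℝ) / n.choose k) ^ ((2 : ℝ) / k) ≤ (m : ℝ) / n.choose 2 := by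
  obtain ⟨k, rfl⟩ : ∃ j, k = j + 2 := ⟨k - 2, by omega⟩
  obtain ⟨x, hax, hxa, hq, hP⟩ := exists_factorial_mul_choose_add_choose_le k a v (by omega) hva
  have hka : (k : ℝ) + 1 ≤ a := by exact_mod_cast (show k + 1 ≤ a by omega)
  have han' : (a : ℝ) + 1 ≤ n := by exact_mod_cast han
  have hu : (c : ℝ) / n.choose (k + 2) ≤
      (descPochhammer ℝ (k + 2)).eval x / (descPochhammer ℝ (k + 2)).eval (n : ℝ) := by
    rw [descPochhammer_eval_div_eval_natCast]
    gcongr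
    rw [le_div_iff₀ (by positivity), mul_comm]
    exact le_trans (by gcongr; exact_mod_cast hc) hP
  have hw : (descPochhammer ℝ 2).eval x / (descPochhammer ℝ 2).eval (n : ℝ) ≤
      (m : ℝ) / n.choose 2 := by
    have hm' : ((a.choose 2 : ℕ) : ℝ) + v ≤ m := by exact_mod_cast hm
    rw [descPochhammer_eval_div_eval_natCast]
    gcongr
    simp only [descPochhammer_eval_eq_prod_range, prod_range_succ, prod_range_zero,
      Nat.factorial_two]
    rw [Nat.cast_choose_two] at hm'
    push_cast
    linarith
  have hw₀ : 0 ≤ (descPochhammer ℝ 2).eval x / (descPochhammer ℝ 2).eval (n : ℝ) :=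
    div_nonneg (descPochhammer_nonneg (by push_cast; linarith))
      (descPochhammer_nonneg (by push_cast; linarith))
  exact_mod_cast rpow_div_le_of_pow_le_pow (m := 2) (k := k + 2) (by positivity) (by positivity)
    (by omega) <| calc
      ((c : ℝ) / n.choose (k + 2)) ^ 2
        ≤ ((descPochhammer ℝ (k + 2)).eval x / (descPochhammer ℝ (k + 2)).eval (n : ℝ)) ^ 2 := by
          gcongr
      _ ≤ ((descPochhammer ℝ 2).eval x / (descPochhammer ℝ 2).eval (n : ℝ)) ^ (k + 2) :=
          sq_descPochhammer_div_le_pow k (by linarith) (by linarith) (by linarith)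
      _ ≤ ((m : ℝ) / n.choose 2) ^ (k + 2) := by gcongr

open scoped FinsetFamily

lemma Finset.exists_initialSegment_card_eq {α : Type*} [LinearOrder α] (A : Finset α) {m : ℕ}
    (hm : m ≤ #A) : ∃ B ⊆ A, #B = m ∧ ∀ x ∈ B, ∀ y ∈ A, y ≤ x → y ∈ B := by
  induction m with
  | zero => exact ⟨∅, empty_subset _, card_empty, by simp⟩
  | succ m ih =>
    obtain ⟨B, hBA, hBcard, hB⟩ := ih (by omega)
    have hne : (A \ B).Nonempty := by rw [← card_pos, card_sdiff_of_subset hBA]; omega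
    obtain ⟨hyA, hyB⟩ := mem_sdiff.1 ((A \ B).min'_mem hne)
    refine ⟨insert _ B, insert_subset hyA hBA, by rw [card_insert_of_notMem hyB, hBcard], ?_⟩
    intro x hx z hz hzx
    rw [mem_insert] at hx ⊢
    rcases hx with rfl | hx
    · by_contra! h
      exact h.1 (le_antisymm hzx (min'_le _ _ (mem_sdiff.2 ⟨hz, h.2⟩)))
    · exact Or.inr (hB x hx z hz hzx)

section Shadow

variable {n : ℕ}

lemma lowerShadow_eq_shadow_iterate {k r : ℕ} {𝒜 : Finset (Finset (Fin n))}
    (h𝒜 : (𝒜 : Set (Finset (Fin n))).Sized k) (hr : r ≤ k) :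
    lowerShadow n r 𝒜 = ∂^[k - r] 𝒜 := by
  ext t
  simp only [lowerShadow, mem_filter, mem_univ, true_and,
    mem_shadow_iterate_iff_exists_mem_card_add]
  constructor
  · rintro ⟨rfl, s, hs, hts⟩
    exact ⟨s, hs, hts, by rw [h𝒜 hs]; omega⟩
  · rintro ⟨s, hs, hts, hcard⟩
    exact ⟨by have := h𝒜 hs; omega, s, hs, hts⟩

lemma card_lowerShadow_le_of_isInitSeg {k r : ℕ} {𝒜 𝒞 : Finset (Finset (Fin n))}
    (h𝒜 : (𝒜 : Set (Finset (Fin n))).Sized k) (h𝒞 : Colex.IsInitSeg 𝒞 k) (hcard : #𝒞 ≤ #𝒜)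
    (hr : r ≤ k) : #(lowerShadow n r 𝒞) ≤ #(lowerShadow n r 𝒜) := by
  rw [lowerShadow_eq_shadow_iterate h𝒜 hr, lowerShadow_eq_shadow_iterate h𝒞.1 hr]
  exact iterated_kk h𝒜 hcard h𝒞

lemma exists_isInitSeg_card_eq {k m : ℕ} (hm : m ≤ n.choose k) :
    ∃ 𝒞 : Finset (Finset (Fin n)), Colex.IsInitSeg 𝒞 k ∧ #𝒞 = m := by
  set A := (powersetCard k (univ : Finset (Fin n))).map toColex.toEmbedding
  obtain ⟨B, hBA, hBcard, hB⟩ := A.exists_initialSegment_card_eq (m := m) (by simpa [A] using hm)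
  refine ⟨B.map ofColex.toEmbedding, ⟨fun t ht => ?_, fun s t hs hts => ?_⟩, by simpa using hBcard⟩
  · simp only [coe_map, Set.mem_image, mem_coe] at ht
    obtain ⟨t, ht, rfl⟩ := ht
    simpa [A] using hBA ht
  · simp only [mem_map_equiv] at hs ⊢
    exact hB _ hs _ (by simpa [A] using hts.2) hts.1.le

/-- The neighbours of `a` in the graph whose edges are the pairs covered by members of `𝒜`. -/
def shadowNeighborFinset (𝒜 : Finset (Finset (Fin n))) (a : Fin n) : Finset (Fin n) :=
  {u | u ≠ a ∧ ∃ t ∈ 𝒜, a ∈ t ∧ u ∈ t}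

@[simp]
lemma mem_shadowNeighborFinset {𝒜 : Finset (Finset (Fin n))} {a u : Fin n} :
    u ∈ shadowNeighborFinset 𝒜 a ↔ u ≠ a ∧ ∃ t ∈ 𝒜, a ∈ t ∧ u ∈ t := by
  simp [shadowNeighborFinset]

lemma card_le_choose_add_choose {k : ℕ} {𝒜 : Finset (Finset (Fin n))} {a : Fin n}
    (h𝒜 : (𝒜 : Set (Finset (Fin n))).Sized k) (ha : ∀ t ∈ 𝒜, ∀ u ∈ t, u ≤ a) :
    #𝒜 ≤ (a : ℕ).choose k + (#(shadowNeighborFinset 𝒜 a)).choose (k - 1) := by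
  have hout : {t ∈ 𝒜 | a ∉ t} ⊆ powersetCard k (Iio a) := by
    intro t ht
    rw [mem_filter] at ht
    refine mem_powersetCard.2 ⟨fun u hu => mem_Iio.2 ((ha t ht.1 u hu).lt_of_ne ?_), h𝒜 ht.1⟩
    rintro rfl
    exact ht.2 hu
  have hin : {t ∈ 𝒜 | a ∈ t} ⊆
      (powersetCard (k - 1) (shadowNeighborFinset 𝒜 a)).image (insert a) := by
    intro t ht
    rw [mem_filter] at ht
    refine mem_image.2 ⟨t.erase a, mem_powersetCard.2 ⟨fun u hu => ?_, ?_⟩, insert_erase ht.2⟩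
    · exact mem_shadowNeighborFinset.2 ⟨ne_of_mem_erase hu, t, ht.1, ht.2, mem_of_mem_erase hu⟩
    · rw [card_erase_of_mem ht.2, h𝒜 ht.1]
  calc #𝒜 = #{t ∈ 𝒜 | a ∉ t} + #{t ∈ 𝒜 | a ∈ t} := by
        rw [add_comm, card_filter_add_card_filter_not]
    _ ≤ #(powersetCard k (Iio a)) +
          #((powersetCard (k - 1) (shadowNeighborFinset 𝒜 a)).image (insert a)) := by
        gcongr
    _ ≤ _ := by
        grw [card_image_le]
        rw [card_powersetCard, card_powersetCard, Fin.card_Iio]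

lemma choose_two_add_card_le_card_lowerShadow {𝒜 : Finset (Finset (Fin n))} {a : Fin n}
    (h : powersetCard 2 (Iio a) ⊆ lowerShadow n 2 𝒜) :
    (a : ℕ).choose 2 + #(shadowNeighborFinset 𝒜 a) ≤ #(lowerShadow n 2 𝒜) := by
  set W := shadowNeighborFinset 𝒜 a
  have hpairs : W.image (fun u => {u, a}) ⊆ lowerShadow n 2 𝒜 := by
    intro p hp
    obtain ⟨u, hu, rfl⟩ := mem_image.1 hp
    obtain ⟨hua, t, ht, hat, hut⟩ := mem_shadowNeighborFinset.1 hu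
    simp only [lowerShadow, mem_filter, mem_univ, true_and]
    exact ⟨card_pair hua, t, ht, insert_subset hut (singleton_subset_iff.2 hat)⟩
  have hinj : Set.InjOn (fun u => ({u, a} : Finset (Fin n))) W := by
    intro u hu w _ huw
    have hua : u ≠ a := (mem_shadowNeighborFinset.1 hu).1
    have : u ∈ ({w, a} : Finset (Fin n)) := by
      rw [← show ({u, a} : Finset (Fin n)) = {w, a} from huw]
      exact mem_insert_self u {a}
    simpa [hua] using this
  have hdisj : Disjoint (powersetCard 2 (Iio a)) (W.image fun u => {u, a}) := by
    refine disjoint_left.2 fun p hp hp' => ?_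
    obtain ⟨u, -, rfl⟩ := mem_image.1 hp'
    simpa using (mem_powersetCard.1 hp).1 (mem_insert_of_mem (mem_singleton_self a))
  calc (a : ℕ).choose 2 + #W = #(powersetCard 2 (Iio a) ∪ W.image fun u => {u, a}) := by
        rw [card_union_of_disjoint hdisj, Finset.card_image_of_injOn hinj, card_powersetCard,
          Fin.card_Iio]
    _ ≤ _ := card_le_card (union_subset h hpairs)

lemma powersetCard_Iio_max'_subset_lowerShadow_initSeg {r : ℕ} (s : Finset (Fin n))
    (hs : s.Nonempty) (hr : r ≤ #s) :
    powersetCard r (Iio (s.max' hs)) ⊆ lowerShadow n r (Colex.initSeg s) := by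
  intro p hp
  rw [mem_powersetCard] at hp
  simp only [lowerShadow, mem_filter, mem_univ, true_and]
  refine ⟨hp.2, ?_⟩
  set a := s.max' hs
  rcases le_or_gt #s (a : ℕ) with hsa | has
  · obtain ⟨t, hpt, htIio, htcard⟩ :=
      exists_subsuperset_card_eq hp.1 (hp.2 ▸ hr) (by rwa [Fin.card_Iio])
    refine ⟨t, Colex.mem_initSeg.2 ⟨htcard.symm, ?_⟩, hpt⟩
    calc toColex t ≤ toColex {a} :=
          (Colex.toColex_lt_singleton.2 fun b hb => mem_Iio.1 (htIio hb)).le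
      _ ≤ toColex s := Colex.singleton_le_toColex.2 ⟨a, s.max'_mem hs, le_rfl⟩
  · have hsIic : s = Iic a :=
      eq_of_subset_of_card_le (fun b hb => mem_Iic.2 (s.le_max' b hb)) (by rw [Fin.card_Iic]; omega)
    exact ⟨s, Colex.mem_initSeg_self, hp.1.trans (hsIic ▸ Iio_subset_Iic_self)⟩

theorem exists_card_initSeg_le_and_le_card_lowerShadow (s : Finset (Fin n)) (hs : 2 ≤ #s) :
    ∃ a v : ℕ, #s - 1 ≤ v ∧ v ≤ a ∧ a < n ∧
      #(Colex.initSeg s) ≤ a.choose #s + v.choose (#s - 1) ∧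
      a.choose 2 + v ≤ #(lowerShadow n 2 (Colex.initSeg s)) := by
  have hne : s.Nonempty := card_pos.1 (by omega)
  set a := s.max' hne
  set W := shadowNeighborFinset (Colex.initSeg s) a
  have hle : ∀ t ∈ Colex.initSeg s, ∀ u ∈ t, u ≤ a := fun t ht =>
    Colex.forall_le_mono (Colex.mem_initSeg.1 ht).2 fun b hb => s.le_max' b hb
  have hsW : s.erase a ⊆ W := fun u hu =>
    mem_shadowNeighborFinset.2
      ⟨ne_of_mem_erase hu, s, Colex.mem_initSeg_self, s.max'_mem hne, mem_of_mem_erase hu⟩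
  have hWa : W ⊆ Iio a := fun u hu => by
    obtain ⟨hua, t, ht, -, hut⟩ := mem_shadowNeighborFinset.1 hu
    exact mem_Iio.2 ((hle t ht u hut).lt_of_ne hua)
  refine ⟨a, #W, ?_, ?_, a.isLt, card_le_choose_add_choose Colex.isInitSeg_initSeg.1 hle,
    choose_two_add_card_le_card_lowerShadow
      (powersetCard_Iio_max'_subset_lowerShadow_initSeg s hne hs)⟩
  · rw [← card_erase_of_mem (s.max'_mem hne)]
    exact card_le_card hsW
  · simpa using card_le_card hWa

end Shadow

theorem lower_shadow_power_bound_general (k n : ℕ) (hk : 3 ≤ k)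
    (S : Finset (Finset (Fin n))) (hS : ∀ A ∈ S, A.card = k) (hne : S.Nonempty) :
    ((S.card : ℝ) / (Nat.choose n k : ℝ)) ^ ((2 : ℝ) / (k : ℝ))
      ≤ ((lowerShadow n 2 S).card : ℝ) / (Nat.choose n 2 : ℝ) := by
  have hSk : (S : Set (Finset (Fin n))).Sized k := hS
  obtain ⟨𝒞, h𝒞, h𝒞S⟩ := exists_isInitSeg_card_eq (n := n) (by simpa using hSk.card_le)
  obtain ⟨s, rfl, rfl⟩ := h𝒞.exists_initSeg (card_pos.1 (h𝒞S ▸ hne.card_pos))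
  obtain ⟨a, v, hv, hva, han, hsize, hshadow⟩ :=
    exists_card_initSeg_le_and_le_card_lowerShadow s (by omega)
  exact div_choose_rpow_le_div_choose_two (by omega) hv hva han (h𝒞S ▸ hsize)
    (hshadow.trans (card_lowerShadow_le_of_isInitSeg hSk h𝒞 h𝒞S.le (by omega)))

/-- **Normalized lower-shadow inequality (used in Case 3 of Lemma 8 of the paper).**
For `3 ≤ k ≤ n` and nonempty `S ⊆ [n]^{(k)}`,
`|δ_{k−2}^-(S)| / C(n,2) ≥ (|S| / C(n,k))^{2/k}`. -/
theorem lower_shadow_power_bound (k n : ℕ) (hk : 3 ≤ k) (hkn : k ≤ n)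
    (S : Finset (Finset (Fin n))) (hS : ∀ A ∈ S, A.card = k) (hne : S.Nonempty) :
    ((S.card : ℝ) / (Nat.choose n k : ℝ)) ^ ((2 : ℝ) / (k : ℝ))
      ≤ ((lowerShadow n 2 S).card : ℝ) / (Nat.choose n 2 : ℝ) :=
  lower_shadow_power_bound_general k n hk S hS hne
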